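/- For all t > 0, the derivatives of τ(t) = -log(t + e^{-t} - 1) and ρ(t) = τ(t) + log(1 - e^{-t}) satisfy τ'(t) ≤ ρ'(t) ≤ (1/2)τ'(t) < 0. -/

import Mathlib

/-! With `u = e^{-t}` and `f = t + u - 1 > 0` one has `τ' = -(1 - u)/f` and `ρ' = τ' + u/(1 - u)`.
The first inequality is `u/(1 - u) ≥ 0`, and the second, `u/(1 - u) ≤ (1 - u)/(2f)`, clears
denominators to `2tu + u² ≤ 1`, i.e. `t ≤ sinh t`. -/

open Real

lemma add_exp_neg_sub_one_pos {t : ℝ} (ht : t ≠ 0) : 0 < t + exp (-t) - 1 := by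
  linarith [add_one_lt_exp (neg_ne_zero.mpr ht)]

lemma hasDerivAt_add_exp_neg_sub_one (t : ℝ) :
    HasDerivAt (fun s ↦ s + exp (-s) - 1) (1 - exp (-t)) t := by
  simpa [sub_eq_add_neg] using ((hasDerivAt_id t).add (hasDerivAt_neg t).exp).sub_const 1

lemma hasDerivAt_neg_log_add_exp_neg_sub_one {t : ℝ} (ht : t ≠ 0) :
    HasDerivAt (fun s ↦ -log (s + exp (-s) - 1))
      (-((1 - exp (-t)) / (t + exp (-t) - 1))) t :=
  ((hasDerivAt_add_exp_neg_sub_one t).log (add_exp_neg_sub_one_pos ht).ne').neg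

lemma hasDerivAt_log_one_sub_exp_neg {t : ℝ} (ht : t ≠ 0) :
    HasDerivAt (fun s ↦ log (1 - exp (-s))) (exp (-t) / (1 - exp (-t))) t := by
  have hne : 1 - exp (-t) ≠ 0 := sub_ne_zero.mpr fun h ↦ ht (by simpa using h.symm)
  simpa using ((hasDerivAt_neg t).exp.const_sub 1).log hne

lemma two_mul_mul_exp_neg_add_exp_neg_sq_lt_one {t : ℝ} (ht : 0 < t) :
    2 * t * exp (-t) + exp (-t) ^ 2 < 1 := by
  have hsinh : 2 * t < exp t - exp (-t) := by
    linarith [sinh_eq t ▸ self_lt_sinh_iff.mpr ht]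
  have hinv : exp t * exp (-t) = 1 := by rw [← exp_add, add_neg_cancel, exp_zero]
  nlinarith [exp_pos (-t)]

lemma exp_neg_div_one_sub_exp_neg_le {t : ℝ} (ht : 0 < t) :
    exp (-t) / (1 - exp (-t)) ≤ (1 - exp (-t)) / (2 * (t + exp (-t) - 1)) := by
  have hu : exp (-t) < 1 := exp_lt_one_iff.mpr (neg_lt_zero.mpr ht)
  have hf := add_exp_neg_sub_one_pos ht.ne'
  rw [div_le_div_iff₀ (by linarith) (by linarith)]
  nlinarith [two_mul_mul_exp_neg_add_exp_neg_sq_lt_one ht]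

/-- For all t > 0, the derivatives of τ(t) = -log(t + e^{-t} - 1) and
ρ(t) = τ(t) + log(1 - e^{-t}) satisfy τ'(t) ≤ ρ'(t) ≤ (1/2)τ'(t) < 0. -/
theorem tau_rho_deriv_ineq
    (τ ρ : ℝ → ℝ)
    (hτ : ∀ t, τ t = -Real.log (t + Real.exp (-t) - 1))
    (hρ : ∀ t, ρ t = τ t + Real.log (1 - Real.exp (-t))) :
    ∀ t > (0 : ℝ),
      deriv τ t ≤ deriv ρ t ∧ deriv ρ t ≤ (1 / 2) * deriv τ t ∧
        (1 / 2) * deriv τ t < 0 := by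
  intro t ht
  have hτd : HasDerivAt τ _ t :=
    funext hτ ▸ hasDerivAt_neg_log_add_exp_neg_sub_one ht.ne'
  have hρd : HasDerivAt ρ _ t :=
    (show τ + (fun s ↦ log (1 - exp (-s))) = ρ from (funext hρ).symm) ▸
      hτd.add (hasDerivAt_log_one_sub_exp_neg ht.ne')
  rw [hτd.deriv, hρd.deriv]
  have hu : exp (-t) < 1 := exp_lt_one_iff.mpr (neg_lt_zero.mpr ht)
  have hf := add_exp_neg_sub_one_pos ht.ne'
  have hneg_τ'_pos : 0 < (1 - exp (-t)) / (t + exp (-t) - 1) := div_pos (by linarith) hf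
  have hhalf : (1 - exp (-t)) / (2 * (t + exp (-t) - 1))
      = (1 / 2) * ((1 - exp (-t)) / (t + exp (-t) - 1)) := by
    field_simp
  have hρ_sub_τ : 0 ≤ exp (-t) / (1 - exp (-t)) := div_nonneg (exp_pos _).le (by linarith)
  have hρ_sub_τ_le := exp_neg_div_one_sub_exp_neg_le ht
  exact ⟨by linarith, by linarith, by linarith⟩
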